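/- Define φ : ℝ → ℝ by φ(0) = 0 and φ(t) = (2/π)((cos(2t) − cos(t))/t³ + (sin(2t) − (1/2)sin(t))/t²) for t ≠ 0. Then φ is continuous on ℝ and belongs to L¹(ℝ). Moreover, for ε ∈ (0,π/2], let y^ε ∈ ℓ¹(ℤ) be given by y_0^ε = 1 − 3ε/(2π) and y_n^ε = (cos(2nε) − cos(nε))/(ε π n²) for n ≠ 0, and let z^ε ∈ ℓ¹(ℤ) be given by z_0^ε = 1 − y_0^ε and z_n^ε = −y_n^ε for n ≠ 0. Then z_n^ε − z_{n−1}^ε = ε ∫_{ε(n−1)}^{ε n} φ(t) dt for all n ∈ ℤ. -/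

import Mathlib

open MeasureTheory Filter Set

/-- The function `φ` from the proof of Theorem 2.1(b):
`φ(0) = 0` and `φ(t) = (2/π)((cos 2t − cos t)/t³ + (sin 2t − ½ sin t)/t²)` for `t ≠ 0`. -/
noncomputable def phiFn (t : ℝ) : ℝ :=
  if t = 0 then 0
  else (2 / Real.pi) * ((Real.cos (2 * t) - Real.cos t) / t ^ 3 +
    (Real.sin (2 * t) - (1 / 2) * Real.sin t) / t ^ 2)

/-- The explicit sequence `y^ε`: `y_0^ε = 1 − 3ε/(2π)` and
`y_n^ε = (cos(2nε) − cos(nε))/(ε π n²)` for `n ≠ 0`. -/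
noncomputable def ySeq (ε : ℝ) (n : ℤ) : ℝ :=
  if n = 0 then 1 - 3 * ε / (2 * Real.pi)
  else (Real.cos (2 * n * ε) - Real.cos (n * ε)) / (ε * Real.pi * (n : ℝ) ^ 2)

/-- The sequence `z^ε`: `z_0^ε = 1 − y_0^ε` and `z_n^ε = −y_n^ε` for `n ≠ 0`. -/
noncomputable def zSeq (ε : ℝ) (n : ℤ) : ℝ :=
  if n = 0 then 1 - ySeq ε 0 else -ySeq ε n

/-! With `G t = (cos 2t - cos t) / t²`, continuously extended by `G 0 = -3/2`, one has
`G' = -π φ` and `z_n^ε = -(ε/π) G(εn)`, so the identity is the fundamental theorem of calculus.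
A fourth-order Taylor expansion of the numerator of `φ` shows `φ t = O(t)` at `0`, which gives
continuity, and `φ t = O(t⁻²)` at infinity gives integrability. -/

open Real Topology

lemma abs_cos_two_mul_sub_cos_add_mul_le {t : ℝ} (ht : |t| ≤ 1 / 2) :
    |cos (2 * t) - cos t + t * (sin (2 * t) - 1 / 2 * sin t)| ≤ 4 * t ^ 4 := by
  set a := cos (2 * t) - (1 - (2 * t) ^ 2 / 2)
  set b := cos t - (1 - t ^ 2 / 2)
  set c := sin (2 * t) - (2 * t - (2 * t) ^ 3 / 6)
  set d := sin t - (t - t ^ 3 / 6)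
  have h2t : |2 * t| = 2 * |t| := by rw [abs_mul, abs_two]
  have ha : |a| ≤ (2 * |t|) ^ 4 * (5 / 96) := h2t ▸ cos_bound (by linarith)
  have hb : |b| ≤ |t| ^ 4 * (5 / 96) := cos_bound (by linarith)
  have hc : |t * c| ≤ |t| * ((2 * |t|) ^ 5 / 100) := by
    rw [abs_mul]; gcongr; exact h2t ▸ sin_bound (by linarith)
  have hd : |t / 2 * d| ≤ |t| / 2 * (|t| ^ 5 / 100) := by
    rw [abs_mul, abs_div, abs_two]; gcongr; exact sin_bound (by linarith)
  have ht6 : |t| ^ 6 ≤ |t| ^ 4 / 4 := by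
    have := pow_le_pow_left₀ (abs_nonneg t) ht 2
    nlinarith [pow_nonneg (abs_nonneg t) 4]
  have hsplit : cos (2 * t) - cos t + t * (sin (2 * t) - 1 / 2 * sin t)
      = a - b + t * c - t / 2 * d - 5 / 4 * t ^ 4 := by ring
  rw [hsplit, ← Even.pow_abs ⟨2, rfl⟩ t]
  rw [abs_le] at ha hb hc hd ⊢
  constructor <;> nlinarith [abs_nonneg t]

lemma phiFn_of_ne_zero {t : ℝ} (ht : t ≠ 0) :
    phiFn t = 2 / π * ((cos (2 * t) - cos t + t * (sin (2 * t) - 1 / 2 * sin t)) / t ^ 3) := by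
  rw [phiFn, if_neg ht]
  field_simp

lemma abs_cos_sub_cos_le_two (x y : ℝ) : |cos x - cos y| ≤ 2 :=
  (abs_sub _ _).trans (by linarith [abs_cos_le_one x, abs_cos_le_one y])

lemma two_div_pi_lt_one : 2 / π < 1 := (div_lt_one pi_pos).mpr (by linarith [pi_gt_three])

lemma abs_phiFn_le_of_abs_le {t : ℝ} (ht : |t| ≤ 1 / 2) : |phiFn t| ≤ 4 * |t| := by
  rcases eq_or_ne t 0 with rfl | ht0
  · simp [phiFn]
  rw [phiFn_of_ne_zero ht0, abs_mul, abs_of_pos (by positivity : 0 < 2 / π), abs_div, abs_pow]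
  calc 2 / π * (|cos (2 * t) - cos t + t * (sin (2 * t) - 1 / 2 * sin t)| / |t| ^ 3)
      ≤ 1 * (4 * t ^ 4 / |t| ^ 3) := by
        gcongr
        · exact two_div_pi_lt_one.le
        · exact abs_cos_two_mul_sub_cos_add_mul_le ht
    _ = 4 * |t| := by
        rw [← Even.pow_abs ⟨2, rfl⟩ t]
        field_simp

lemma continuousAt_phiFn_zero : ContinuousAt phiFn 0 := by
  have hsmall : ∀ᶠ t in 𝓝 (0 : ℝ), ‖phiFn t‖ ≤ 4 * |t| := by
    filter_upwards [Metric.ball_mem_nhds (0 : ℝ) one_half_pos] with t ht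
    rw [Metric.mem_ball, Real.dist_eq, sub_zero] at ht
    exact abs_phiFn_le_of_abs_le ht.le
  rw [ContinuousAt, show phiFn 0 = 0 by simp [phiFn]]
  refine squeeze_zero_norm' hsmall ?_
  simpa using ((continuous_abs.const_mul 4).tendsto (0 : ℝ))

lemma continuous_phiFn : Continuous phiFn := by
  refine continuous_iff_continuousAt.mpr fun t => ?_
  rcases eq_or_ne t 0 with rfl | ht
  · exact continuousAt_phiFn_zero
  · have hformula : ContinuousAt (fun s : ℝ => 2 / π * ((cos (2 * s) - cos s) / s ^ 3 +
        (sin (2 * s) - 1 / 2 * sin s) / s ^ 2)) t := by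
      fun_prop (disch := positivity)
    refine hformula.congr ?_
    filter_upwards [eventually_ne_nhds ht] with s hs
    simp only [phiFn, if_neg hs]

lemma abs_phiFn_le_of_le_abs {t : ℝ} (ht : 1 / 2 ≤ |t|) : |phiFn t| ≤ 28 * (1 + t ^ 2)⁻¹ := by
  have ht0 : t ≠ 0 := abs_pos.mp (by linarith)
  have hcos := abs_cos_sub_cos_le_two (2 * t) t
  have hsin : |sin (2 * t) - 1 / 2 * sin t| ≤ 3 / 2 := by
    have := abs_sub (sin (2 * t)) (1 / 2 * sin t)
    rw [abs_mul, abs_of_pos (one_half_pos : (0 : ℝ) < 1 / 2)] at this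
    linarith [abs_sin_le_one (2 * t), abs_sin_le_one t]
  have ht2 : t ^ 2 = |t| ^ 2 := (sq_abs t).symm
  rw [phiFn, if_neg ht0, abs_mul, abs_of_pos (by positivity : 0 < 2 / π), ht2]
  calc 2 / π * |(cos (2 * t) - cos t) / t ^ 3 + (sin (2 * t) - 1 / 2 * sin t) / |t| ^ 2|
      ≤ 1 * (2 / |t| ^ 3 + 3 / 2 / |t| ^ 2) := by
        gcongr
        · exact two_div_pi_lt_one.le
        · refine (abs_add_le _ _).trans ?_
          rw [abs_div, abs_div, abs_pow, abs_pow, abs_abs]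
          gcongr
    _ ≤ 28 * (1 + |t| ^ 2)⁻¹ := by
        have hu : 0 < |t| := by linarith
        rw [one_mul, ← div_eq_mul_inv, div_add_div _ _ (by positivity) (by positivity),
          div_le_div_iff₀ (by positivity) (by positivity)]
        nlinarith [pow_pos hu 3, pow_pos hu 4, pow_pos hu 5]

lemma abs_phiFn_le (t : ℝ) : |phiFn t| ≤ 28 * (1 + t ^ 2)⁻¹ := by
  rcases le_or_gt |t| (1 / 2) with ht | ht
  · have ht2 : t ^ 2 ≤ 1 / 4 := by nlinarith [sq_abs t, abs_nonneg t]
    calc |phiFn t| ≤ 4 * |t| := abs_phiFn_le_of_abs_le ht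
      _ ≤ 28 * (1 + t ^ 2)⁻¹ := by
        rw [← div_eq_mul_inv, le_div_iff₀ (by positivity)]
        nlinarith [abs_nonneg t]
  · exact abs_phiFn_le_of_le_abs ht.le

lemma integrable_phiFn : Integrable phiFn :=
  (integrable_inv_one_add_sq.const_mul 28).mono' continuous_phiFn.aestronglyMeasurable
    (ae_of_all _ abs_phiFn_le)

/-- The continuous extension of `(cos 2t - cos t) / t²`, written through
`cos 2t - cos t = -2 sin (3t/2) sin (t/2)` so that continuity comes from that of `sinc`. -/
noncomputable def cosTwoMulSubCosDivSq (t : ℝ) : ℝ :=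
  -(3 / 2) * sinc (3 * t / 2) * sinc (t / 2)

lemma continuous_cosTwoMulSubCosDivSq : Continuous cosTwoMulSubCosDivSq := by
  unfold cosTwoMulSubCosDivSq; fun_prop

lemma cosTwoMulSubCosDivSq_zero : cosTwoMulSubCosDivSq 0 = -(3 / 2) := by
  simp [cosTwoMulSubCosDivSq]

lemma cosTwoMulSubCosDivSq_of_ne_zero {t : ℝ} (ht : t ≠ 0) :
    cosTwoMulSubCosDivSq t = (cos (2 * t) - cos t) / t ^ 2 := by
  rw [cosTwoMulSubCosDivSq, sinc_of_ne_zero (by positivity), sinc_of_ne_zero (by positivity),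
    cos_sub_cos]
  field_simp
  ring_nf

lemma hasDerivAt_cosTwoMulSubCosDivSq_of_ne_zero {t : ℝ} (ht : t ≠ 0) :
    HasDerivAt cosTwoMulSubCosDivSq (-π * phiFn t) t := by
  have hquot := (((hasDerivAt_id t).const_mul 2).cos.sub (hasDerivAt_cos t)).div
    (hasDerivAt_pow 2 t) (pow_ne_zero 2 ht)
  refine (hquot.congr_of_eventuallyEq ?_).congr_deriv ?_
  · filter_upwards [eventually_ne_nhds ht] with s hs
    simp [cosTwoMulSubCosDivSq_of_ne_zero hs]
  · simp only [phiFn, if_neg ht, id, Pi.sub_apply]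
    field_simp
    ring

lemma hasDerivAt_cosTwoMulSubCosDivSq (t : ℝ) :
    HasDerivAt cosTwoMulSubCosDivSq (-π * phiFn t) t :=
  hasDerivAt_of_hasDerivAt_of_ne' (fun _ => hasDerivAt_cosTwoMulSubCosDivSq_of_ne_zero)
    continuous_cosTwoMulSubCosDivSq.continuousAt (continuous_phiFn.const_mul _).continuousAt t

lemma integral_phiFn (a b : ℝ) :
    ∫ t in a..b, phiFn t = (cosTwoMulSubCosDivSq a - cosTwoMulSubCosDivSq b) / π := by
  rw [intervalIntegral.integral_eq_sub_of_hasDerivAt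
    (f := fun s => -cosTwoMulSubCosDivSq s / π)
    (fun t _ => by simpa [pi_ne_zero] using (hasDerivAt_cosTwoMulSubCosDivSq t).neg.div_const π)
    (continuous_phiFn.intervalIntegrable a b)]
  ring

lemma zSeq_eq (ε : ℝ) (n : ℤ) : zSeq ε n = -(ε / π) * cosTwoMulSubCosDivSq (ε * n) := by
  rcases eq_or_ne n 0 with rfl | hn
  · rw [zSeq, if_pos rfl, ySeq, if_pos rfl, Int.cast_zero, mul_zero, cosTwoMulSubCosDivSq_zero]
    field_simp
    ring
  rcases eq_or_ne ε 0 with rfl | hε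
  · simp [zSeq, ySeq, hn]
  have hn' : (n : ℝ) ≠ 0 := Int.cast_ne_zero.mpr hn
  rw [zSeq, if_neg hn, ySeq, if_neg hn, cosTwoMulSubCosDivSq_of_ne_zero (mul_ne_zero hε hn')]
  field_simp

lemma summable_abs_ySeq (ε : ℝ) : Summable fun n : ℤ => |ySeq ε n| := by
  refine Summable.of_norm_bounded_eventually
    ((summable_one_div_int_pow.mpr one_lt_two).mul_left (2 / |ε * π|)) ?_
  filter_upwards [eventually_cofinite_ne 0] with n hn
  rw [norm_abs_eq_norm, Real.norm_eq_abs, ySeq, if_neg hn, abs_div, abs_mul _ ((n : ℝ) ^ 2),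
    abs_of_nonneg (sq_nonneg (n : ℝ)), mul_one_div, div_div]
  gcongr
  exact abs_cos_sub_cos_le_two _ _

theorem stmt_11 :
    Continuous phiFn ∧ Integrable phiFn MeasureTheory.volume ∧
    ∀ ε ∈ Set.Ioc (0 : ℝ) (Real.pi / 2),
      Summable (fun n : ℤ => |ySeq ε n|) ∧
      ∀ n : ℤ, zSeq ε n - zSeq ε (n - 1) = ε * ∫ t in (ε * (n - 1))..(ε * n), phiFn t := by
  refine ⟨continuous_phiFn, integrable_phiFn, fun ε _ => ⟨summable_abs_ySeq ε, fun n => ?_⟩⟩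
  rw [integral_phiFn, zSeq_eq, zSeq_eq]
  push_cast
  ring
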